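/- arXiv:1709.02180 — 3 statements merged into one kernel-verified Lean document; each statement's English description precedes it below -/
import Mathlib

section
/- For any connected graph G, the diameter of G is at most 2^(td(G)+1) - 2, where td(G) denotes the tree-depth of G. -/
variable {V : Type*}

/-- `TdLE G S k` : the subgraph of `G` induced on the vertex set `S` has
tree-depth at most `k`, under the paper's convention `td(K₁) = 0`.
The rules mirror the inductive definition: a single vertex has tree-depth `0`,
the tree-depth of a disconnected graph is the maximum over its (unions of)
components, and removing a vertex decreases the tree-depth by at most one. -/
inductive TdLE (G : SimpleGraph V) : Set V → ℕ → Prop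
  | empty (k : ℕ) : TdLE G ∅ k
  | single (v : V) (k : ℕ) : TdLE G {v} k
  | union (S T : Set V) (k : ℕ) (hdisj : Disjoint S T)
      (hsep : ∀ a ∈ S, ∀ b ∈ T, ¬ G.Adj a b)
      (hS : TdLE G S k) (hT : TdLE G T k) : TdLE G (S ∪ T) k
  | remove (S : Set V) (u : V) (hu : u ∈ S) (k : ℕ)
      (h : TdLE G (S \ {u}) k) : TdLE G S (k + 1)

lemma walk_support_left {G : SimpleGraph V} {S T : Set V}
    (hsep : ∀ a ∈ S, ∀ b ∈ T, ¬ G.Adj a b) :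
    ∀ {u v : V} (p : G.Walk u v), (∀ x ∈ p.support, x ∈ S ∪ T) → u ∈ S →
      ∀ x ∈ p.support, x ∈ S := by
  intro u v p
  induction p with
  | nil =>
    intro _ hu x hx
    simp only [SimpleGraph.Walk.support_nil, List.mem_cons, List.not_mem_nil, or_false] at hx
    subst hx; exact hu
  | @cons a b c h q ih =>
    intro hsub hu x hx
    have hb : b ∈ S := by
      rcases hsub b (by simp) with hb | hb
      · exact hb
      · exact absurd h (hsep a hu b hb)
    simp only [SimpleGraph.Walk.support_cons, List.mem_cons] at hx
    rcases hx with rfl | hx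
    · exact hu
    · exact ih (fun y hy => hsub y (by simp [hy])) hb x hx

lemma cons_path_bound {G : SimpleGraph V} {S : Set V} {u : V} {B : ℕ}
    (IH : ∀ {a b : V} (q : G.Walk a b), q.IsPath →
      (∀ x ∈ q.support, x ∈ S \ {u}) → q.length ≤ B) :
    ∀ {b : V} (p : G.Walk u b), p.IsPath → (∀ x ∈ p.support, x ∈ S) →
      p.length ≤ B + 1 := by
  intro b p hp hsub
  cases p with
  | nil => simp
  | cons h q =>
    rw [SimpleGraph.Walk.cons_isPath_iff] at hp
    have hq : ∀ x ∈ q.support, x ∈ S \ {u} := by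
      intro x hx
      refine ⟨hsub x (by simp [hx]), ?_⟩
      intro hxu
      exact hp.2 (hxu ▸ hx)
    simpa using Nat.add_le_add_right (IH q hp.1 hq) 1

lemma path_length_le {G : SimpleGraph V} {S : Set V} {k : ℕ} (h : TdLE G S k) :
    ∀ {u v : V} (p : G.Walk u v), p.IsPath → (∀ x ∈ p.support, x ∈ S) →
      p.length ≤ 2 ^ (k + 1) - 2 := by
  induction h with
  | empty k =>
    intro u v p _ hsub
    exact absurd (hsub u p.start_mem_support) (Set.notMem_empty u)
  | single w k =>
    intro u v p hp hsub
    have hu : u = w := hsub u p.start_mem_support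
    have hv : v = w := hsub v p.end_mem_support
    subst hu; subst hv
    cases p with
    | nil => simp
    | cons h q =>
      rw [SimpleGraph.Walk.cons_isPath_iff] at hp
      exact absurd q.end_mem_support hp.2
  | union S T k hdisj hsep hS hT ihS ihT =>
    intro u v p hp hsub
    rcases hsub u p.start_mem_support with hu | hu
    · exact ihS p hp (walk_support_left hsep p hsub hu)
    · have hsep' : ∀ a ∈ T, ∀ b ∈ S, ¬ G.Adj a b :=
        fun a ha b hb hab => hsep b hb a ha hab.symm
      have := walk_support_left hsep' p (fun x hx => (hsub x hx).symm) hu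
      exact ihT p hp this
  | remove S u hu k h ih =>
    classical
    intro a b p hp hsub
    have h2 : (2:ℕ) ≤ 2 ^ (k + 1) := Nat.one_lt_two_pow_iff.mpr (by omega)
    have hpow : (2:ℕ) ^ (k + 1 + 1) = 2 * 2 ^ (k + 1) := by ring
    by_cases hmem : u ∈ p.support
    · set p1 := p.takeUntil u hmem with hp1
      set p2 := p.dropUntil u hmem with hp2
      have hspec := p.take_spec hmem
      have hlen : p1.length + p2.length = p.length := by
        rw [hp1, hp2, ← SimpleGraph.Walk.length_append, hspec]
      have hp1p : p1.IsPath := hp.takeUntil hmem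
      have hp2p : p2.IsPath := hp.dropUntil hmem
      have hsub1 : ∀ x ∈ p1.support, x ∈ S := fun x hx =>
        hsub x (SimpleGraph.Walk.support_takeUntil_subset p hmem hx)
      have hsub2 : ∀ x ∈ p2.support, x ∈ S := fun x hx =>
        hsub x (SimpleGraph.Walk.support_dropUntil_subset p hmem hx)
      have b1 : p1.length ≤ (2 ^ (k + 1) - 2) + 1 := by
        have := cons_path_bound (fun q hq hsq => ih q hq hsq) p1.reverse
          hp1p.reverse (by
            intro x hx
            exact hsub1 x (by simpa using hx))
        simpa using this
      have b2 : p2.length ≤ (2 ^ (k + 1) - 2) + 1 :=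
        cons_path_bound (fun q hq hsq => ih q hq hsq) p2 hp2p hsub2
      omega
    · have : ∀ x ∈ p.support, x ∈ S \ {u} := fun x hx =>
        ⟨hsub x hx, fun hxu => hmem (hxu ▸ hx)⟩
      have := ih p hp this
      omega

/-- For any connected graph `G`, the diameter of `G` (i.e. every pairwise
shortest-path distance) is at most `2^(td(G)+1) - 2`. -/
theorem diameter_le_of_treeDepth (G : SimpleGraph V) (hG : G.Connected)
    (k : ℕ) (h : TdLE G Set.univ k) (u v : V) :
    G.dist u v ≤ 2 ^ (k + 1) - 2 := by
  classical
  obtain ⟨w⟩ := hG u v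
  have hb := w.bypass_isPath
  calc G.dist u v ≤ w.bypass.length := SimpleGraph.dist_le _
    _ ≤ 2 ^ (k + 1) - 2 := path_length_le h w.bypass hb (fun x _ => Set.mem_univ x)
end

section
/- Let δ > 0 and define the rounding operator ⊕ by x₁ ⊕ x₂ = (1+δ)^{⌊log_{1+δ}(x₁+x₂)⌋} for (x₁,x₂) ≠ (0,0) and 0 ⊕ 0 = 0. Suppose σ and s are defined by the same sequence of h operations: σ₀ = s₀ = 0, σ_{i+1} = σ_i ⊕ d_i and s_{i+1} = s_i + d_i for positive reals d_i. Then s_h / σ_h ≤ (1+δ)^h, i.e., log_{1+δ}(s_h/σ_h) ≤ h. -/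
open Real

/-- The addition-rounding operator: `x₁ ⊕ x₂ = 0` if `x₁ = x₂ = 0`, and
otherwise `x₁ ⊕ x₂ = (1+δ)^⌊log_{1+δ}(x₁+x₂)⌋`. -/
noncomputable def rop (δ x₁ x₂ : ℝ) : ℝ :=
  if x₁ = 0 ∧ x₂ = 0 then 0 else (1 + δ) ^ (⌊Real.logb (1 + δ) (x₁ + x₂)⌋ : ℤ)

/-- Accumulated rounding error: if `σ` and `s` are built by the same `h`
additions, `σ` with the rounding operator `⊕` and `s` exactly, then
`s h / σ h ≤ (1+δ)^h`. -/
theorem accumulated_rounding_error (δ : ℝ) (hδ : 0 < δ) (h : ℕ)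
    (dst : ℕ → ℝ) (hdst : ∀ i, 0 < dst i)
    (σ s : ℕ → ℝ) (hσ0 : σ 0 = 0) (hs0 : s 0 = 0)
    (hσ : ∀ i, σ (i + 1) = rop δ (σ i) (dst i))
    (hs : ∀ i, s (i + 1) = s i + dst i) :
    s h / σ h ≤ (1 + δ) ^ h := by
  have hb : (1:ℝ) < 1 + δ := by linarith
  have hbpos : (0:ℝ) < 1 + δ := by linarith
  have key : ∀ n, 0 ≤ σ n ∧ s n ≤ σ n * (1 + δ) ^ n := by
    intro n
    induction n with
    | zero => simp [hσ0, hs0]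
    | succ n ih =>
      obtain ⟨hσn, hsn⟩ := ih
      have hsum : 0 < σ n + dst n := by have := hdst n; linarith
      have hne : ¬ (σ n = 0 ∧ dst n = 0) := by
        intro ⟨_, h2⟩; exact (hdst n).ne' h2
      have hσrw : σ (n + 1) = (1 + δ) ^ (⌊Real.logb (1 + δ) (σ n + dst n)⌋ : ℤ) := by
        rw [hσ n, rop, if_neg hne]
      set y := Real.logb (1 + δ) (σ n + dst n) with hy
      have hfloor : y - 1 ≤ (⌊y⌋ : ℝ) := by
        have := Int.sub_one_lt_floor y; linarith
      have hpow : (σ n + dst n) / (1 + δ) ≤ σ (n + 1) := by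
        have h1 : (1 + δ) ^ (y - 1) ≤ (1 + δ) ^ ((⌊y⌋ : ℝ)) :=
          Real.rpow_le_rpow_left_iff hb |>.2 hfloor
        have h2 : (1 + δ) ^ (y - 1) = (σ n + dst n) / (1 + δ) := by
          rw [Real.rpow_sub hbpos, Real.rpow_one, hy,
            Real.rpow_logb hbpos (by linarith) hsum]
        rw [hσrw, ← Real.rpow_intCast]
        rw [h2] at h1; exact h1
      have hσn1 : 0 < σ (n + 1) := by
        rw [hσrw]; exact zpow_pos hbpos _
      refine ⟨hσn1.le, ?_⟩
      have hstep : s (n + 1) ≤ (σ n + dst n) * (1 + δ) ^ n := by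
        have h1 : (1:ℝ) ≤ (1 + δ) ^ n := one_le_pow₀ hb.le
        have := hdst n
        rw [hs n]
        nlinarith
      calc s (n + 1) ≤ (σ n + dst n) * (1 + δ) ^ n := hstep
        _ ≤ (σ (n + 1) * (1 + δ)) * (1 + δ) ^ n := by
            have := hpow
            rw [div_le_iff₀ hbpos] at this
            exact mul_le_mul_of_nonneg_right this (by positivity)
        _ = σ (n + 1) * (1 + δ) ^ (n + 1) := by ring
  obtain ⟨hσh, hsh⟩ := key h
  rcases eq_or_lt_of_le hσh with hz | hpos
  · rw [← hz, div_zero]; positivity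
  · rw [div_le_iff₀ hpos]; linarith [hsh]
end

section
/- In the weighted star-like gadget with center vertices a_i, b_i joined to p_l (weights n+l and 2n−l respectively, for l ∈ [1,n]) and a vertex u joined to a_i with weight 5n − j and to b_i with weight 4n + j for some j ∈ [1,n]: the distance between u and p_l equals min(6n + l − j, 6n + j − l), which equals 6n if and only if l = j, and is strictly less than 6n otherwise. -/
/-- Vertices of the gadget: `a_i`, `b_i`, a non-edge vertex `u`, and the
selection vertices `p l` for `l ∈ [1,n]`. -/
inductive GW : Type
  | a : GW
  | b : GW
  | u : GW
  | p : ℕ → GW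
  deriving DecidableEq

/-- The gadget graph: `a` and `b` are each joined to `p l` for every
`1 ≤ l ≤ n`, and `u` is joined to `a` and to `b`. -/
def gadgetGraph (n : ℕ) : SimpleGraph GW where
  Adj x y :=
    (∃ l, 1 ≤ l ∧ l ≤ n ∧
      ((x = GW.a ∧ y = GW.p l) ∨ (x = GW.p l ∧ y = GW.a) ∨
       (x = GW.b ∧ y = GW.p l) ∨ (x = GW.p l ∧ y = GW.b))) ∨
    ((x = GW.u ∧ y = GW.a) ∨ (x = GW.a ∧ y = GW.u) ∨
     (x = GW.u ∧ y = GW.b) ∨ (x = GW.b ∧ y = GW.u))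
  symm := by
    constructor
    rintro x y (⟨l, h1, h2, h⟩ | h)
    · exact Or.inl ⟨l, h1, h2, by tauto⟩
    · exact Or.inr (by tauto)
  loopless := by
    constructor
    rintro x (⟨l, h1, h2, h⟩ | h)
    · rcases h with ⟨ha, hb⟩ | ⟨ha, hb⟩ | ⟨ha, hb⟩ | ⟨ha, hb⟩ <;> subst ha <;> simp_all
    · rcases h with ⟨ha, hb⟩ | ⟨ha, hb⟩ | ⟨ha, hb⟩ | ⟨ha, hb⟩ <;> subst ha <;> simp_all

/-- Edge weights: `{a, p l}` has weight `n + l`, `{b, p l}` has weight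
`2n - l`, `{u, a}` has weight `5n - j`, and `{u, b}` has weight `4n + j`. -/
def gadgetWeight (n j : ℕ) : GW → GW → ℕ
  | GW.a, GW.p l => n + l
  | GW.p l, GW.a => n + l
  | GW.b, GW.p l => 2 * n - l
  | GW.p l, GW.b => 2 * n - l
  | GW.u, GW.a => 5 * n - j
  | GW.a, GW.u => 5 * n - j
  | GW.u, GW.b => 4 * n + j
  | GW.b, GW.u => 4 * n + j
  | _, _ => 0

/-- The total weight of a walk: the sum of the weights of its edges. -/
def walkWeight {V : Type*} {G : SimpleGraph V} (w : V → V → ℕ)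
    {x y : V} (q : G.Walk x y) : ℕ :=
  (q.darts.map fun d => w d.toProd.1 d.toProd.2).sum

/-- Weighted shortest-path distance. -/
noncomputable def wdist {V : Type*} (G : SimpleGraph V) (w : V → V → ℕ)
    (x y : V) : ℕ :=
  sInf {c | ∃ q : G.Walk x y, walkWeight w q = c}


/-- Lower-bound potential. -/
def gD (n j : ℕ) : GW → ℕ
  | GW.u => 0
  | GW.a => 5 * n - j
  | GW.b => 4 * n + j
  | GW.p m => min (6 * n + m - j) (6 * n + j - m)

lemma gD_step (n j : ℕ) (hj1 : 1 ≤ j) (hjn : j ≤ n) :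
    ∀ x y : GW, (gadgetGraph n).Adj x y →
      gD n j y ≤ gD n j x + gadgetWeight n j x y := by
  rintro x y (⟨m, hm1, hmn, (⟨rfl, rfl⟩ | ⟨rfl, rfl⟩ | ⟨rfl, rfl⟩ | ⟨rfl, rfl⟩)⟩ |
    (⟨rfl, rfl⟩ | ⟨rfl, rfl⟩ | ⟨rfl, rfl⟩ | ⟨rfl, rfl⟩)) <;>
    simp only [gD, gadgetWeight] <;> omega

lemma walk_lb (n j : ℕ) (hj1 : 1 ≤ j) (hjn : j ≤ n) {x y : GW}
    (q : (gadgetGraph n).Walk x y) :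
    gD n j y ≤ gD n j x + walkWeight (gadgetWeight n j) q := by
  induction q with
  | nil => simp [walkWeight]
  | cons h q ih =>
      simp only [walkWeight, SimpleGraph.Walk.darts_cons, List.map_cons, List.sum_cons] at *
      have := gD_step n j hj1 hjn _ _ h
      omega

/-- The distance between `u` and `p l` equals `min(6n + l − j, 6n + j − l)`,
which equals `6n` iff `l = j`, and is strictly less than `6n` otherwise. -/
theorem nonedge_gadget_distance (n j : ℕ) (hn : 1 ≤ n)
    (hj1 : 1 ≤ j) (hjn : j ≤ n) (l : ℕ) (hl1 : 1 ≤ l) (hln : l ≤ n) :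
    wdist (gadgetGraph n) (gadgetWeight n j) GW.u (GW.p l) =
      min (6 * n + l - j) (6 * n + j - l) ∧
    (wdist (gadgetGraph n) (gadgetWeight n j) GW.u (GW.p l) = 6 * n ↔ l = j) ∧
    (l ≠ j → wdist (gadgetGraph n) (gadgetWeight n j) GW.u (GW.p l) < 6 * n) := by
  have hub1 : wdist (gadgetGraph n) (gadgetWeight n j) GW.u (GW.p l) ≤ 6 * n + l - j := by
    have hadj1 : (gadgetGraph n).Adj GW.u GW.a := Or.inr (by tauto)
    have hadj2 : (gadgetGraph n).Adj GW.a (GW.p l) := Or.inl ⟨l, hl1, hln, by tauto⟩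
    have : walkWeight (gadgetWeight n j)
        (SimpleGraph.Walk.cons hadj1 (SimpleGraph.Walk.cons hadj2 SimpleGraph.Walk.nil))
        = 6 * n + l - j := by
      simp [walkWeight, gadgetWeight]; omega
    exact Nat.sInf_le ⟨_, this⟩
  have hub2 : wdist (gadgetGraph n) (gadgetWeight n j) GW.u (GW.p l) ≤ 6 * n + j - l := by
    have hadj1 : (gadgetGraph n).Adj GW.u GW.b := Or.inr (by tauto)
    have hadj2 : (gadgetGraph n).Adj GW.b (GW.p l) := Or.inl ⟨l, hl1, hln, by tauto⟩
    have : walkWeight (gadgetWeight n j)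
        (SimpleGraph.Walk.cons hadj1 (SimpleGraph.Walk.cons hadj2 SimpleGraph.Walk.nil))
        = 6 * n + j - l := by
      simp [walkWeight, gadgetWeight]; omega
    exact Nat.sInf_le ⟨_, this⟩
  have hlb : min (6 * n + l - j) (6 * n + j - l) ≤
      wdist (gadgetGraph n) (gadgetWeight n j) GW.u (GW.p l) := by
    apply le_csInf
    · exact ⟨_, ⟨SimpleGraph.Walk.cons (Or.inr (by tauto))
        (SimpleGraph.Walk.cons (Or.inl ⟨l, hl1, hln, by tauto⟩) SimpleGraph.Walk.nil), rfl⟩⟩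
    · rintro c ⟨q, rfl⟩
      have := walk_lb n j hj1 hjn q
      simp only [gD] at this
      omega
  have key : wdist (gadgetGraph n) (gadgetWeight n j) GW.u (GW.p l) =
      min (6 * n + l - j) (6 * n + j - l) := le_antisymm (le_min hub1 hub2) hlb
  refine ⟨key, ?_, ?_⟩ <;> rw [key] <;> omega
end
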